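/- arXiv:math/0610702 — 7 statements merged into one kernel-verified Lean document; each statement's English description precedes it below -/
import Mathlib

section
/- Let λ be a nonzero dominant position on a connected GCM graph (all populations ≥ 0, at least one > 0). Then any convergent game sequence from λ fires every node of the graph at least once. -/
/-- Firing node `i` in the numbers game on a GCM graph: the population at each node `j`
is transformed by `λ_j ↦ λ_j - M_ij·λ_i`. -/
def fire {n : ℕ} (M : Matrix (Fin n) (Fin n) ℤ) (lam : Fin n → ℝ) (i : Fin n) : Fin n → ℝ :=
  fun j => lam j - (M i j : ℝ) * lam i

/-- The position obtained by playing the firing sequence `seq` from position `lam`. -/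
def play {n : ℕ} (M : Matrix (Fin n) (Fin n) ℤ) (lam : Fin n → ℝ) : List (Fin n) → (Fin n → ℝ)
  | [] => lam
  | i :: rest => play M (fire M lam i) rest

/-- `seq` is a legal firing sequence from `lam`: each node is fired only when its
population is positive. -/
def Legal {n : ℕ} (M : Matrix (Fin n) (Fin n) ℤ) (lam : Fin n → ℝ) : List (Fin n) → Prop
  | [] => True
  | i :: rest => 0 < lam i ∧ Legal M (fire M lam i) rest

/-- `seq` is a convergent game sequence for initial position `lam`: it is legal and after
playing it every node has nonpositive population. -/
def Convergent {n : ℕ} (M : Matrix (Fin n) (Fin n) ℤ) (lam : Fin n → ℝ)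
    (seq : List (Fin n)) : Prop :=
  Legal M lam seq ∧ ∀ j, play M lam seq j ≤ 0

/-- `M` is a generalized Cartan matrix. -/
def IsGCM {n : ℕ} (M : Matrix (Fin n) (Fin n) ℤ) : Prop :=
  (∀ i, M i i = 2) ∧ (∀ i j, i ≠ j → M i j ≤ 0) ∧ (∀ i j, i ≠ j → (M i j = 0 ↔ M j i = 0))

lemma play_ge {n : ℕ} (M : Matrix (Fin n) (Fin n) ℤ) (hM : IsGCM M) (i : Fin n) :
    ∀ (seq : List (Fin n)) (lam : Fin n → ℝ), Legal M lam seq → i ∉ seq →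
      lam i ≤ play M lam seq i
  | [], lam, _, _ => le_refl _
  | j :: rest, lam, ⟨hj, hrest⟩, hni => by
      have hji : j ≠ i := fun h => hni (h ▸ List.mem_cons_self)
      have hmji : (M j i : ℝ) ≤ 0 := by exact_mod_cast hM.2.1 j i hji
      have h0 : (M j i : ℝ) * lam j ≤ 0 := mul_nonpos_of_nonpos_of_nonneg hmji hj.le
      have h1 : lam i ≤ fire M lam j i := by simp only [fire]; linarith
      exact h1.trans (play_ge M hM i rest _ hrest (fun h => hni (List.mem_cons_of_mem _ h)))

lemma zero_of_eq {n : ℕ} (M : Matrix (Fin n) (Fin n) ℤ) (hM : IsGCM M) (i : Fin n) :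
    ∀ (seq : List (Fin n)) (lam : Fin n → ℝ), Legal M lam seq → i ∉ seq →
      play M lam seq i ≤ lam i → ∀ j ∈ seq, M j i = 0
  | [], _, _, _, _, j, hj => absurd hj List.not_mem_nil
  | j :: rest, lam, ⟨hj, hrest⟩, hni, hle, k, hk => by
      have hji : j ≠ i := fun h => hni (h ▸ List.mem_cons_self)
      have hmji : (M j i : ℝ) ≤ 0 := by exact_mod_cast hM.2.1 j i hji
      have h0 : (M j i : ℝ) * lam j ≤ 0 := mul_nonpos_of_nonpos_of_nonneg hmji hj.le
      have hni' : i ∉ rest := fun h => hni (List.mem_cons_of_mem _ h)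
      have hge : fire M lam j i ≤ play M (fire M lam j) rest i :=
        play_ge M hM i rest _ hrest hni'
      have heq : (M j i : ℝ) * lam j = 0 := by
        have : lam i ≤ fire M lam j i := by simp only [fire]; linarith
        simp only [fire, play] at hle hge ⊢
        linarith
      have hMj : M j i = 0 := by
        have := (mul_eq_zero.mp heq).resolve_right (ne_of_gt hj)
        exact_mod_cast this
      rcases List.mem_cons.mp hk with h | h
      · exact h ▸ hMj
      · have hfi : fire M lam j i = lam i := by
          simp only [fire, heq]; ring
        exact zero_of_eq M hM i rest _ hrest hni' (by rw [play] at hle; rw [hfi]; exact hle) k h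

/-- On a connected GCM graph, any convergent game sequence from a nonzero dominant
initial position fires every node at least once. -/
theorem every_node_fired {n : ℕ} (M : Matrix (Fin n) (Fin n) ℤ) (hM : IsGCM M)
    (hconn : (SimpleGraph.fromRel fun i j => M i j ≠ 0).Connected)
    (lam : Fin n → ℝ) (hdom : ∀ i, 0 ≤ lam i) (hnz : ∃ i, lam i ≠ 0)
    (seq : List (Fin n)) (hconv : Convergent M lam seq) :
    ∀ i : Fin n, i ∈ seq := by
  intro i
  by_contra hni
  obtain ⟨hleg, hfin⟩ := hconv
  -- seq is nonempty
  have hne : seq ≠ [] := by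
    rintro rfl
    obtain ⟨k, hk⟩ := hnz
    exact hk (le_antisymm (hfin k) (hdom k))
  obtain ⟨j0, hj0⟩ := List.exists_mem_of_ne_nil seq hne
  -- for any node b not in seq, every fired node a has M a b = 0
  have key : ∀ b : Fin n, b ∉ seq → ∀ a ∈ seq, M a b = 0 := by
    intro b hb a ha
    have h1 : lam b ≤ play M lam seq b := play_ge M hM b seq lam hleg hb
    exact zero_of_eq M hM b seq lam hleg hb (le_trans (hfin b) (hdom b)) a ha
  -- membership in seq is closed under adjacency
  set G := SimpleGraph.fromRel fun i j => M i j ≠ 0 with hG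
  have step : ∀ a b : Fin n, G.Adj a b → a ∈ seq → b ∈ seq := by
    intro a b hab ha
    by_contra hb
    obtain ⟨hne', h⟩ := hab
    have h1 : M a b = 0 := key b hb a ha
    have h2 : M b a = 0 := (hM.2.2 a b hne').mp h1
    rcases h with h | h
    · exact h h1
    · exact h h2
  have walk : ∀ {a b : Fin n} (w : G.Walk a b), a ∈ seq → b ∈ seq := by
    intro a b w
    induction w with
    | nil => exact id
    | cons h _ ih => exact fun ha => ih (step _ _ h ha)
  obtain ⟨w⟩ := hconn j0 i
  exact hni (walk w hj0)
end

section
/- For any strongly dominant position (a_1,…,a_n) on the Dynkin diagram A_n, there is a legal firing sequence of length n(n+1)/2 after which the resulting position is (−a_n, −a_{n−1}, …, −a_2, −a_1); in particular the numbers game on A_n converges from any strongly dominant initial position. -/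
/-- The Cartan matrix of the Dynkin diagram `Aₙ` (path graph on `n` nodes). -/
def cartanA (n : ℕ) : Matrix (Fin n) (Fin n) ℤ :=
  Matrix.of fun i j =>
    if i = j then 2 else if (i : ℕ) + 1 = (j : ℕ) ∨ (j : ℕ) + 1 = (i : ℕ) then -1 else 0

namespace AnGameAux

open Fin.NatCast

lemma fire_cartan {n : ℕ} (lam : Fin n → ℝ) (i j : Fin n) :
    fire (cartanA n) lam i j =
      if (j : ℕ) = (i : ℕ) then -(lam i)
      else if (i : ℕ) + 1 = (j : ℕ) ∨ (j : ℕ) + 1 = (i : ℕ) then lam j + lam i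
      else lam j := by
  rcases eq_or_ne i j with rfl | h
  · simp only [fire, cartanA, Matrix.of_apply, if_pos rfl]
    push_cast; ring
  · have h' : ¬ (j : ℕ) = (i : ℕ) := fun e => h (Fin.ext e.symm)
    simp only [fire, cartanA, Matrix.of_apply, if_neg h, if_neg h']
    split_ifs <;> push_cast <;> ring

lemma play_append {n : ℕ} (M : Matrix (Fin n) (Fin n) ℤ) (lam : Fin n → ℝ)
    (s t : List (Fin n)) : play M lam (s ++ t) = play M (play M lam s) t := by
  induction s generalizing lam with
  | nil => rfl
  | cons i rest ih => exact ih _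

lemma legal_append {n : ℕ} (M : Matrix (Fin n) (Fin n) ℤ) (lam : Fin n → ℝ)
    {s t : List (Fin n)} (h1 : Legal M lam s) (h2 : Legal M (play M lam s) t) :
    Legal M lam (s ++ t) := by
  induction s generalizing lam with
  | nil => exact h2
  | cons i rest ih => exact ⟨h1.1, ih _ h1.2 h2⟩

variable {n : ℕ}

/-- extension of `a` to `ℕ`. -/
def A (a : Fin n → ℝ) (i : ℕ) : ℝ := if h : i < n then a ⟨i, h⟩ else 0

/-- partial sums of `A`. -/
def P (a : Fin n → ℝ) (t : ℕ) : ℝ := ∑ i ∈ Finset.range t, A a i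

lemma P_succ (a : Fin n → ℝ) (t : ℕ) : P a (t + 1) = P a t + A a t :=
  Finset.sum_range_succ _ _

lemma P_zero (a : Fin n → ℝ) : P a 0 = 0 := by simp [P]

lemma P_one (a : Fin n → ℝ) : P a 1 = A a 0 := by simp [P]

lemma A_pos {a : Fin n → ℝ} (ha : ∀ i, 0 < a i) {i : ℕ} (h : i < n) : 0 < A a i := by
  simp only [A, dif_pos h]; exact ha _

lemma P_lt {a : Fin n → ℝ} (ha : ∀ i, 0 < a i) {s t : ℕ} (hst : s < t) (ht : t ≤ n) :
    P a s < P a t := by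
  have key : ∀ u, u ≤ n → ∀ r, r < u → P a r < P a u := by
    intro u
    induction u with
    | zero => omega
    | succ u ih =>
      intro hu r hr
      rw [P_succ]
      have h2 := A_pos ha (show u < n by omega)
      rcases Nat.lt_or_ge r u with h | h
      · have h1 := ih (by omega) r h
        linarith
      · have : r = u := by omega
        subst this
        linarith
  exact key t ht s hst

/-- State within block `k`: after having fired nodes `k, k-1, …, j`. -/
def C (a : Fin n → ℝ) (k j : ℕ) : Fin n → ℝ := fun m =>
  if (m : ℕ) + 1 < j then -A a (k - 1 - (m : ℕ))
  else if (m : ℕ) + 1 = j then P a (k + 1) - P a (k - j + 1)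
  else if (m : ℕ) = j then -(P a (k + 1) - P a (k - j))
  else if (m : ℕ) ≤ k then -A a (k - (m : ℕ))
  else if (m : ℕ) = k + 1 then P a (k + 2)
  else A a (m : ℕ)

/-- State just before block `k` starts. -/
def preB (a : Fin n → ℝ) (k : ℕ) : Fin n → ℝ := fun m =>
  if (m : ℕ) < k then -A a (k - 1 - (m : ℕ))
  else if (m : ℕ) = k then P a (k + 1)
  else A a (m : ℕ)

lemma preB_zero (a : Fin n → ℝ) : preB a 0 = a := by
  funext m
  simp only [preB, Nat.not_lt_zero, if_false]
  rcases Nat.eq_zero_or_pos (m : ℕ) with h | h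
  · rw [if_pos h, P_one, A, dif_pos (h ▸ m.isLt)]
    congr 1; exact Fin.ext h.symm
  · rw [if_neg (by omega), A, dif_pos m.isLt]

lemma C_zero (a : Fin n → ℝ) (k : ℕ) : C a k 0 = preB a (k + 1) := by
  funext m
  simp only [C, preB]
  split_ifs
  all_goals try first
    | rfl | omega | (exfalso; omega) | (exact False.elim (by assumption))
    | (congr 2 <;> omega) | (congr 3 <;> omega)
  all_goals try
    (rw [show k - 0 = k from rfl, show k + 1 - 1 - (m : ℕ) = k from by omega, P_succ a k]
     ring)

lemma stepTop {a : Fin n → ℝ} (k : ℕ) (hk : k < n) [NeZero n] :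
    fire (cartanA n) (preB a k) ((k : ℕ) : Fin n) = C a k k := by
  have hkv : (((k : ℕ) : Fin n) : ℕ) = k := Fin.val_cast_of_lt hk
  funext m
  rw [fire_cartan, hkv]
  simp only [C, preB, hkv]
  split_ifs
  all_goals try first
    | rfl | omega | (exfalso; omega) | (exact False.elim (by assumption))
    | (congr 2 <;> omega) | (congr 3 <;> omega)
  all_goals try first
    | (rw [show k - k = 0 from by omega, P_zero]; ring)
    | (rw [show k - 1 - (m : ℕ) = 0 from by omega, show k - k + 1 = 1 from by omega, P_one];
       ring)
    | (have hm : (m : ℕ) = k + 1 := by assumption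
       rw [hm, P_succ a (k + 1)]; ring)

lemma stepInner {a : Fin n → ℝ} (k j : ℕ) (hk : k < n) (hj : j < k) [NeZero n] :
    fire (cartanA n) (C a k (j + 1)) ((j : ℕ) : Fin n) = C a k j := by
  have hjv : (((j : ℕ) : Fin n) : ℕ) = j := Fin.val_cast_of_lt (by omega)
  funext m
  rw [fire_cartan, hjv]
  simp only [C, hjv]
  split_ifs
  all_goals try first
    | rfl | omega | (exfalso; omega) | (exact False.elim (by assumption))
    | (congr 2 <;> omega) | (congr 3 <;> omega)
  all_goals try first
    | (rw [show k - 1 - (m : ℕ) = k - j from by omega,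
           show k - (j + 1) + 1 = k - j from by omega, P_succ a (k - j)]; ring)
    | (have hm : (m : ℕ) = j + 1 := by assumption
       rw [hm, P_succ a (k - (j + 1))]; ring)

/-- the descending run `[j-1, j-2, …, 0]`. -/
def desc (n : ℕ) [NeZero n] : ℕ → List (Fin n)
  | 0 => []
  | j + 1 => ((j : ℕ) : Fin n) :: desc n j

lemma desc_length [NeZero n] (j : ℕ) : (desc n j).length = j := by
  induction j with
  | zero => rfl
  | succ j ih => simp [desc, ih]

lemma C_val_at {a : Fin n → ℝ} (k j : ℕ) (hk : k < n) (hj : j < k) [NeZero n] :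
    C a k (j + 1) ((j : ℕ) : Fin n) = P a (k + 1) - P a (k - j) := by
  have hjv : (((j : ℕ) : Fin n) : ℕ) = j := Fin.val_cast_of_lt (by omega)
  have h1 : k - (j + 1) + 1 = k - j := by omega
  have h2 : ¬ (j + 1 < j + 1) := by omega
  simp only [C, hjv, h1, if_neg h2]
  norm_num

lemma inner {a : Fin n → ℝ} (ha : ∀ i, 0 < a i) (k : ℕ) (hk : k < n) [NeZero n] :
    ∀ j, j ≤ k → Legal (cartanA n) (C a k j) (desc n j) ∧
      play (cartanA n) (C a k j) (desc n j) = C a k 0 := by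
  intro j
  induction j with
  | zero => exact fun _ => ⟨trivial, rfl⟩
  | succ j ih =>
    intro hjk
    have hj : j < k := by omega
    have hfire := stepInner (a := a) k j hk hj
    have hval := C_val_at (a := a) k j hk hj
    have hpos : 0 < P a (k + 1) - P a (k - j) := by
      have := P_lt ha (show k - j < k + 1 from by omega) (by omega)
      linarith
    refine ⟨⟨by rw [hval]; exact hpos, ?_⟩, ?_⟩
    · rw [hfire]; exact (ih (by omega)).1
    · show play (cartanA n) (fire (cartanA n) (C a k (j + 1)) _) (desc n j) = C a k 0
      rw [hfire]; exact (ih (by omega)).2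

lemma preB_val_at {a : Fin n → ℝ} (k : ℕ) (hk : k < n) [NeZero n] :
    preB a k ((k : ℕ) : Fin n) = P a (k + 1) := by
  have hkv : (((k : ℕ) : Fin n) : ℕ) = k := Fin.val_cast_of_lt hk
  simp [preB, hkv]

lemma block {a : Fin n → ℝ} (ha : ∀ i, 0 < a i) (k : ℕ) (hk : k < n) [NeZero n] :
    Legal (cartanA n) (preB a k) (desc n (k + 1)) ∧
      play (cartanA n) (preB a k) (desc n (k + 1)) = preB a (k + 1) := by
  have hval := preB_val_at (a := a) k hk
  have hpos : 0 < P a (k + 1) := by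
    have := P_lt ha (show 0 < k + 1 from by omega) (by omega)
    rw [P_zero] at this; exact this
  have hfire := stepTop (a := a) k hk
  refine ⟨⟨by rw [hval]; exact hpos, ?_⟩, ?_⟩
  · rw [hfire]; exact (inner ha k hk k le_rfl).1
  · show play (cartanA n) (fire (cartanA n) (preB a k) _) (desc n k) = preB a (k + 1)
    rw [hfire, (inner ha k hk k le_rfl).2, C_zero]

/-- concatenation of the first `k` blocks. -/
def seqUpTo (n : ℕ) [NeZero n] : ℕ → List (Fin n)
  | 0 => []
  | k + 1 => seqUpTo n k ++ desc n (k + 1)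

lemma seqUpTo_two_length [NeZero n] (k : ℕ) : 2 * (seqUpTo n k).length = k * (k + 1) := by
  induction k with
  | zero => rfl
  | succ k ih =>
    simp only [seqUpTo, List.length_append, desc_length]
    rw [Nat.mul_add, ih]; ring

lemma seqUpTo_length [NeZero n] (k : ℕ) : (seqUpTo n k).length = k * (k + 1) / 2 := by
  have := seqUpTo_two_length (n := n) k
  omega

lemma seqUpTo_spec {a : Fin n → ℝ} (ha : ∀ i, 0 < a i) [NeZero n] :
    ∀ k, k ≤ n → Legal (cartanA n) a (seqUpTo n k) ∧
      play (cartanA n) a (seqUpTo n k) = preB a k := by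
  intro k
  induction k with
  | zero => exact fun _ => ⟨trivial, (preB_zero a).symm⟩
  | succ k ih =>
    intro hk
    obtain ⟨hleg, hplay⟩ := ih (by omega)
    obtain ⟨bleg, bplay⟩ := block ha k (by omega)
    constructor
    · exact legal_append _ _ hleg (by rw [hplay]; exact bleg)
    · show play (cartanA n) a (seqUpTo n k ++ desc n (k + 1)) = preB a (k + 1)
      rw [play_append, hplay, bplay]

end AnGameAux

/-- For any strongly dominant position `(a_1,…,a_n)` on the Dynkin diagram `Aₙ`, there is a
legal firing sequence of length `n(n+1)/2` whose resulting position is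
`(−a_n, −a_{n−1}, …, −a_1)`; in particular all terminal populations are nonpositive,
so the numbers game on `Aₙ` converges from any strongly dominant initial position. -/
theorem An_game (n : ℕ) (a : Fin n → ℝ) (ha : ∀ i, 0 < a i) :
    ∃ seq : List (Fin n),
      Legal (cartanA n) a seq ∧
      seq.length = n * (n + 1) / 2 ∧
      (∀ j : Fin n, play (cartanA n) a seq j = - a j.rev) ∧
      (∀ j : Fin n, play (cartanA n) a seq j ≤ 0) := by
  rcases Nat.eq_zero_or_pos n with rfl | hn
  · exact ⟨[], trivial, rfl, fun j => j.elim0, fun j => j.elim0⟩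
  haveI : NeZero n := ⟨hn.ne'⟩
  obtain ⟨hleg, hplay⟩ := AnGameAux.seqUpTo_spec ha n le_rfl
  have hfin : ∀ j : Fin n, play (cartanA n) a (AnGameAux.seqUpTo n n) j = - a j.rev := by
    intro j
    rw [hplay]
    have hjn : (j : ℕ) < n := j.isLt
    have h2 : n - 1 - (j : ℕ) < n := by omega
    simp only [AnGameAux.preB, AnGameAux.A, if_pos hjn, dif_pos h2]
    have hidx : (⟨n - 1 - (j : ℕ), h2⟩ : Fin n) = j.rev := by
      apply Fin.ext; simp only [Fin.val_rev]; omega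
    rw [hidx]
  refine ⟨AnGameAux.seqUpTo n n, hleg, AnGameAux.seqUpTo_length n, hfin, ?_⟩
  intro j
  rw [hfin j]
  have := ha j.rev
  linarith
end

section
/- Let W be a Coxeter group with generators s_1,…,s_n acting on the real vector space V with basis α_1,…,α_n via s_i(v) = v − 2B(α_i, v)α_i, where B(α_i, α_j) = M_ij/2 for an E-generalized Cartan matrix M. Fix i ≠ j with m_ij finite and odd (so M_ij M_ji = 4cos²(π/m_ij)), and let k = (m_ij − 1)/2. Then (s_i s_j)^k · α_i = (−M_ji / (2cos(π/m_ij))) · α_j. -/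
open Real

/-!
On the plane spanned by `α_i, α_j` the rotation `s_i s_j` acts, in the basis `α_i, α_j`, through
the Chebyshev recurrence `u_{q+2} = 2 cos θ · u_{q+1} - u_q` with `θ = π / m`, so that
`(s_i s_j)^r α_i = (sin((2r+1)θ) α_i - (M_ji / 2cos θ) sin(2rθ) α_j) / sin θ`.
For `m = 2k + 1` the first coefficient is `sin π = 0` and the second is `sin(π - θ) / sin θ = 1`.
-/

/-- The quasi-standard reflection `s_i` acting on `V = ℝⁿ` with basis of simple roots
`α_j = Pi.single j 1`: `s_i(v) = v − 2B(α_i,v)α_i` where `B(α_i,α_j) = M_ij/2`, so that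
`2B(α_i, v) = ∑_j M_ij v_j`. -/
noncomputable def erefl {n : ℕ} (M : Matrix (Fin n) (Fin n) ℝ) (i : Fin n)
    (v : Fin n → ℝ) : Fin n → ℝ :=
  v - (∑ j, M i j * v j) • (Pi.single i 1 : Fin n → ℝ)

section Reflection

variable {n : ℕ} (M : Matrix (Fin n) (Fin n) ℝ)

lemma erefl_smul_single_add_smul_single (p i j : Fin n) (x y : ℝ) :
    erefl M p (x • Pi.single i 1 + y • Pi.single j 1) =
      x • Pi.single i 1 + y • Pi.single j 1 - (M p i * x + M p j * y) • Pi.single p 1 := by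
  unfold erefl
  congr 2
  simp [Pi.single_apply, mul_add, mul_ite, Finset.sum_add_distrib, mul_comm]

lemma erefl_comp_erefl_smul_single_add_smul_single {i j : Fin n} (hMii : M i i = 2)
    (hMjj : M j j = 2) (x y : ℝ) :
    (erefl M i ∘ erefl M j) (x • Pi.single i 1 + y • Pi.single j 1) =
      (M i j * M j i * x - x + M i j * y) • Pi.single i 1 + (-(M j i) * x - y) • Pi.single j 1 := by
  simp only [Function.comp_apply, erefl_smul_single_add_smul_single, hMjj]
  rw [show x • Pi.single i 1 + y • Pi.single j 1 - (M j i * x + 2 * y) • Pi.single j 1 =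
      x • Pi.single i 1 + (-(M j i) * x - y) • (Pi.single j 1 : Fin n → ℝ) by module,
    erefl_smul_single_add_smul_single, hMii]
  module

end Reflection

lemma sin_add_two_mul_mul (θ q : ℝ) :
    sin ((q + 2) * θ) = 2 * cos θ * sin ((q + 1) * θ) - sin (q * θ) := by
  rw [show (q + 2) * θ = (q + 1) * θ + θ by ring, show q * θ = (q + 1) * θ - θ by ring,
    sin_add, sin_sub]
  ring

theorem iterate_erefl_comp_erefl_single {n : ℕ} (M : Matrix (Fin n) (Fin n) ℝ) {i j : Fin n}
    (hMii : M i i = 2) (hMjj : M j j = 2) {θ : ℝ} (hs : sin θ ≠ 0) (hc : cos θ ≠ 0)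
    (hprod : M i j * M j i = 4 * cos θ ^ 2) (r : ℕ) :
    (erefl M i ∘ erefl M j)^[r] (Pi.single i 1) =
      (sin ((2 * r + 1) * θ) / sin θ) • Pi.single i 1 +
        (-(M j i) / (2 * cos θ) * (sin (2 * r * θ) / sin θ)) • Pi.single j 1 := by
  induction r with
  | zero => simp [hs]
  | succ r ih =>
    rw [Function.iterate_succ_apply', ih, erefl_comp_erefl_smul_single_add_smul_single M hMii hMjj]
    have even_step := sin_add_two_mul_mul θ (2 * r)
    have odd_step := sin_add_two_mul_mul θ (2 * r + 1)
    rw [show (2 * r + 1 + 1 : ℝ) = 2 * r + 2 by ring] at odd_step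
    push_cast
    rw [show (2 * ((r : ℝ) + 1) + 1) = 2 * r + 1 + 2 by ring,
      show (2 * ((r : ℝ) + 1)) = 2 * r + 2 by ring, odd_step, even_step]
    congr 2
    · field_simp
      linear_combination (2 * cos θ * sin ((2 * r + 1) * θ) - sin (2 * r * θ)) * hprod
    · field_simp
      ring

theorem dihedral_odd_general {n : ℕ} (M : Matrix (Fin n) (Fin n) ℝ) (i j : Fin n)
    (hMii : M i i = 2) (hMjj : M j j = 2)
    (m : ℕ) (hm : 3 ≤ m) (hodd : Odd m)
    (hprod : M i j * M j i = 4 * Real.cos (π / m) ^ 2)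
    (k : ℕ) (hk : k = (m - 1) / 2) :
    (erefl M i ∘ erefl M j)^[k] (Pi.single i 1) =
      (-(M j i) / (2 * Real.cos (π / m))) • (Pi.single j 1 : Fin n → ℝ) := by
  have hm0 : (0 : ℝ) < m := by positivity
  have hθ_lt : π / m < π / 2 :=
    div_lt_div_of_pos_left pi_pos two_pos (by exact_mod_cast (by omega : 2 < m))
  have hθ_pos : 0 < π / m := by positivity
  have hs : sin (π / m) ≠ 0 := (sin_pos_of_pos_of_lt_pi hθ_pos (by linarith [pi_pos])).ne'
  have hc : cos (π / m) ≠ 0 := (cos_pos_of_mem_Ioo ⟨by linarith [pi_pos], hθ_lt⟩).ne'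
  have h2k : (2 * k + 1 : ℝ) = m := by
    obtain ⟨t, rfl⟩ := hodd
    exact_mod_cast (by omega : 2 * k + 1 = 2 * t + 1)
  have hsin_m : sin ((2 * k + 1) * (π / m)) = 0 := by
    rw [h2k, mul_div_cancel₀ _ hm0.ne', sin_pi]
  have hsin_m_sub_one : sin (2 * k * (π / m)) = sin (π / m) := by
    rw [show (2 * k : ℝ) * (π / m) = (2 * k + 1) * (π / m) - π / m by ring, h2k,
      mul_div_cancel₀ _ hm0.ne', sin_pi_sub]
  rw [iterate_erefl_comp_erefl_single M hMii hMjj hs hc hprod, hsin_m, hsin_m_sub_one,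
    zero_div, zero_smul, zero_add, div_self hs, mul_one]

/-- If `m_ij ≥ 3` is odd and `M_ij M_ji = 4cos²(π/m_ij)` with `k = (m_ij − 1)/2`, then
`(s_i s_j)^k · α_i = (−M_ji/(2cos(π/m_ij))) · α_j`. -/
theorem dihedral_odd {n : ℕ} (M : Matrix (Fin n) (Fin n) ℝ) (i j : Fin n) (hij : i ≠ j)
    (hMii : M i i = 2) (hMjj : M j j = 2) (hMij : M i j ≤ 0) (hMji : M j i ≤ 0)
    (m : ℕ) (hm : 3 ≤ m) (hodd : Odd m)
    (hprod : M i j * M j i = 4 * Real.cos (π / m) ^ 2)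
    (k : ℕ) (hk : k = (m - 1) / 2) :
    (erefl M i ∘ erefl M j)^[k] (Pi.single i 1) =
      (-(M j i) / (2 * Real.cos (π / m))) • (Pi.single j 1 : Fin n → ℝ) :=
  dihedral_odd_general M i j hMii hMjj m hm hodd hprod k hk
end

section
/- Let m ≥ 2 be an integer, θ = π/m, and let X = ((pq−1, −p),(q, −1)) be the 2×2 real matrix where pq = 4cos²θ, p, q > 0. Then for every positive integer k, X^k = (1/sin 2θ) · ((sin(2(k+1)θ) + sin(2kθ), −p sin(2kθ)), (q sin(2kθ), −sin(2kθ) − sin(2(k−1)θ))). -/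
open Real

/-- Closed form for the powers of the matrix `X = ((pq−1, −p),(q, −1))` of `S_iS_j` in the
quasi-standard geometric representation of a dihedral Coxeter group, where
`pq = 4cos²(π/m)`. -/
theorem dihedral_matrix_power (m : ℕ) (hm : 2 ≤ m) (p q : ℝ) (hp : 0 < p) (hq : 0 < q)
    (θ : ℝ) (hθ : θ = π / m) (hpq : p * q = 4 * Real.cos θ ^ 2)
    (X : Matrix (Fin 2) (Fin 2) ℝ) (hX : X = !![p * q - 1, -p; q, -1])
    (k : ℕ) (hk : 0 < k) :
    X ^ k = (1 / Real.sin (2 * θ)) •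
      !![Real.sin (2 * (k + 1) * θ) + Real.sin (2 * k * θ), -p * Real.sin (2 * k * θ);
         q * Real.sin (2 * k * θ), -Real.sin (2 * k * θ) - Real.sin (2 * ((k : ℝ) - 1) * θ)] := by
  have hm0 : (0:ℝ) < m := by positivity
  have hθpos : 0 < θ := by rw [hθ]; positivity
  have hθle : θ ≤ π / 2 := by
    rw [hθ]
    apply div_le_div_of_nonneg_left Real.pi_pos.le (by norm_num)
    exact_mod_cast hm
  have hcos : 0 < Real.cos θ := by
    rcases lt_or_eq_of_le hθle with h | h
    · exact Real.cos_pos_of_mem_Ioo ⟨by linarith [Real.pi_pos], h⟩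
    · exfalso
      have : Real.cos θ = 0 := by rw [h, Real.cos_pi_div_two]
      nlinarith [mul_pos hp hq]
  have hsin : 0 < Real.sin θ :=
    Real.sin_pos_of_pos_of_lt_pi hθpos (by linarith [Real.pi_pos])
  have hs : Real.sin (2 * θ) ≠ 0 := by
    rw [Real.sin_two_mul]; positivity
  have h1 : 2 * Real.cos (2 * θ) = p * q - 2 := by
    rw [Real.cos_two_mul]; linarith
  have hrec : ∀ x : ℝ, Real.sin (x + 2 * θ) + Real.sin (x - 2 * θ)
      = Real.sin x * (p * q - 2) := by
    intro x
    rw [Real.sin_add, Real.sin_sub, ← h1]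
    ring
  induction k with
  | zero => omega
  | succ n ih =>
    rcases Nat.eq_zero_or_pos n with hn | hn
    · subst hn
      subst hX
      push_cast
      have e0 : Real.sin (2 * ((1:ℝ) - 1) * θ) = 0 := by norm_num
      have e1 : Real.sin (2 * ((1:ℝ) + 1) * θ) + Real.sin (2 * 0 * θ)
          = Real.sin (2 * θ) * (p * q - 2) := by
        have := hrec (2 * θ)
        have a1 : 2*θ + 2*θ = 2 * ((1:ℝ)+1) * θ := by ring
        have a2 : 2*θ - 2*θ = 2 * (0:ℝ) * θ := by ring
        rw [a1, a2] at this
        exact this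
      have e2 : Real.sin (2 * (0:ℝ) * θ) = 0 := by norm_num
      ext i j
      fin_cases i <;> fin_cases j <;>
        simp [Matrix.smul_apply, pow_one] <;> field_simp <;>
        linarith [e0, e1, e2, show Real.sin (2 * θ * (1 + 1)) = Real.sin (2 * ((1:ℝ) + 1) * θ) by ring_nf]
    · have IH := ih hn
      have e1 : Real.sin (2 * ((n:ℝ) + 1 + 1) * θ) + Real.sin (2 * (n:ℝ) * θ)
          = Real.sin (2 * ((n:ℝ) + 1) * θ) * (p * q - 2) := by
        have := hrec (2 * ((n:ℝ) + 1) * θ)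
        have a1 : 2*((n:ℝ)+1)*θ + 2*θ = 2*((n:ℝ)+1+1)*θ := by ring
        have a2 : 2*((n:ℝ)+1)*θ - 2*θ = 2*(n:ℝ)*θ := by ring
        rw [a1, a2] at this
        exact this
      have e2 : Real.sin (2 * ((n:ℝ) + 1) * θ) + Real.sin (2 * ((n:ℝ) - 1) * θ)
          = Real.sin (2 * (n:ℝ) * θ) * (p * q - 2) := by
        have := hrec (2 * (n:ℝ) * θ)
        have a1 : 2*(n:ℝ)*θ + 2*θ = 2*((n:ℝ)+1)*θ := by ring
        have a2 : 2*(n:ℝ)*θ - 2*θ = 2*((n:ℝ)-1)*θ := by ring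
        rw [a1, a2] at this
        exact this
      have e3 : Real.sin (2 * ((n:ℝ) + 1 - 1) * θ) = Real.sin (2 * (n:ℝ) * θ) := by
        norm_num
      rw [pow_succ, IH, hX, Matrix.smul_mul]
      push_cast
      congr 1
      ext i j
      fin_cases i <;> fin_cases j <;>
        simp [Matrix.mul_apply, Fin.sum_univ_two] <;>
        first
          | linarith [e1, e2, e3]
          | linear_combination (-q) * e2
end

section
/- Let p, q > 0 be real numbers with pq = 4, and let X = ((pq−1, −p),(q, −1)) = ((3, −p),(q, −1)). Then for every positive integer k, X^k = ((2k+1, −kp),(kq, −2k+1)). Consequently (s_is_j)^k · α_i = (2k+1)α_i + kq·α_j has both coefficients positive, so s_is_j has infinite order. -/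
open Real

/-!
In root coordinates `s₀ ∘ s₁` acts by the matrix `X = 1 + N` with `N = !![2, -p; q, -2]`.
Since `N` has trace `0` and determinant `pq - 4`, Cayley–Hamilton gives `N * N = (4 - pq) • 1 = 0`,
so `X ^ k = 1 + k • N` grows linearly; in particular the `α₁`-coordinate `kq` of
`(s₀ ∘ s₁)^[k] α₀` never vanishes.
-/

open Matrix

theorem one_add_pow_of_mul_self_eq_zero {R : Type*} [Semiring R] {N : R} (hN : N * N = 0)
    (k : ℕ) : (1 + N) ^ k = 1 + k • N := by
  induction k with
  | zero => simp
  | succ k ih =>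
    rw [pow_succ, ih, add_mul, one_mul, mul_add, mul_one, smul_mul_assoc, hN, smul_zero,
      add_zero, succ_nsmul]
    abel

theorem Matrix.iterate_mulVec {n R : Type*} [Fintype n] [DecidableEq n] [CommSemiring R]
    (A : Matrix n n R) (k : ℕ) : (A *ᵥ ·)^[k] = ((A ^ k) *ᵥ ·) := by
  ext1 v
  rw [← Matrix.toLin'_apply, Matrix.toLin'_pow, Module.End.pow_apply]
  rfl

theorem erefl_comp_erefl_eq_mulVec (p q : ℝ) :
    erefl !![2, -p; -q, 2] 0 ∘ erefl !![2, -p; -q, 2] 1 = (!![p * q - 1, -p; q, -1] *ᵥ ·) := by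
  ext v i
  fin_cases i <;> simp [erefl, Fin.sum_univ_two, mulVec, dotProduct] <;> ring

theorem pow_eq_of_mul_eq_four {p q : ℝ} (hpq : p * q = 4) (k : ℕ) :
    !![p * q - 1, -p; q, -1] ^ k = !![2 * (k : ℝ) + 1, -(k * p); k * q, -(2 * (k : ℝ)) + 1] := by
  have hN : !![2, -p; q, -2] * !![2, -p; q, -2] = 0 := by
    ext i j; fin_cases i <;> fin_cases j <;> simp [Matrix.mul_apply, Fin.sum_univ_two] <;> linarith
  have hX : !![p * q - 1, -p; q, -1] = 1 + !![2, -p; q, -2] := by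
    ext i j; fin_cases i <;> fin_cases j <;> simp <;> norm_num [hpq]
  rw [hX, one_add_pow_of_mul_self_eq_zero hN]
  ext i j; fin_cases i <;> fin_cases j <;> simp <;> ring

theorem iterate_erefl_comp_erefl_single_zero {p q : ℝ} (hpq : p * q = 4) (k : ℕ) :
    (erefl !![2, -p; -q, 2] 0 ∘ erefl !![2, -p; -q, 2] 1)^[k] (Pi.single 0 1) =
      (2 * (k : ℝ) + 1) • (Pi.single 0 1 : Fin 2 → ℝ) + ((k : ℝ) * q) • Pi.single 1 1 := by
  rw [erefl_comp_erefl_eq_mulVec, iterate_mulVec, pow_eq_of_mul_eq_four hpq]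
  ext i
  fin_cases i <;> simp

theorem dihedral_pq_four_general (p q : ℝ) (hq : 0 < q) (hpq : p * q = 4)
    (X : Matrix (Fin 2) (Fin 2) ℝ) (hX : X = !![p * q - 1, -p; q, -1])
    (M : Matrix (Fin 2) (Fin 2) ℝ) (hM : M = !![2, -p; -q, 2]) :
    (∀ k : ℕ, 0 < k →
      X ^ k = !![2 * (k : ℝ) + 1, -(k * p); k * q, -(2 * (k : ℝ)) + 1]) ∧
    (∀ k : ℕ, 0 < k →
      (erefl M 0 ∘ erefl M 1)^[k] (Pi.single 0 1) =
        (2 * (k : ℝ) + 1) • (Pi.single 0 1 : Fin 2 → ℝ) +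
          ((k : ℝ) * q) • (Pi.single 1 1 : Fin 2 → ℝ) ∧
      (0 : ℝ) < 2 * (k : ℝ) + 1 ∧ (0 : ℝ) < (k : ℝ) * q) ∧
    (∀ k : ℕ, 0 < k → (erefl M 0 ∘ erefl M 1)^[k] ≠ id) := by
  subst hX hM
  refine ⟨fun k _ ↦ pow_eq_of_mul_eq_four hpq k,
    fun k _ ↦ ⟨iterate_erefl_comp_erefl_single_zero hpq k, by positivity, by positivity⟩, ?_⟩
  intro k hk hid
  have hα₁ := congrFun (congrFun hid (Pi.single 0 1)) 1
  rw [iterate_erefl_comp_erefl_single_zero hpq] at hα₁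
  simp [hk.ne', hq.ne'] at hα₁

/-- When `pq = 4`: the powers of `X = ((pq−1,−p),(q,−1))` are `((2k+1, −kp),(kq, −2k+1))`;
consequently `(s_is_j)^k · α_i = (2k+1)α_i + kq·α_j` has both coefficients positive, and
`s_is_j` has infinite order. Here the reflections act on `V = ℝ²` with `M = ((2,−p),(−q,2))`. -/
theorem dihedral_pq_four (p q : ℝ) (hp : 0 < p) (hq : 0 < q) (hpq : p * q = 4)
    (X : Matrix (Fin 2) (Fin 2) ℝ) (hX : X = !![p * q - 1, -p; q, -1])
    (M : Matrix (Fin 2) (Fin 2) ℝ) (hM : M = !![2, -p; -q, 2]) :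
    (∀ k : ℕ, 0 < k →
      X ^ k = !![2 * (k : ℝ) + 1, -(k * p); k * q, -(2 * (k : ℝ)) + 1]) ∧
    (∀ k : ℕ, 0 < k →
      (erefl M 0 ∘ erefl M 1)^[k] (Pi.single 0 1) =
        (2 * (k : ℝ) + 1) • (Pi.single 0 1 : Fin 2 → ℝ) +
          ((k : ℝ) * q) • (Pi.single 1 1 : Fin 2 → ℝ) ∧
      (0 : ℝ) < 2 * (k : ℝ) + 1 ∧ (0 : ℝ) < (k : ℝ) * q) ∧
    (∀ k : ℕ, 0 < k → (erefl M 0 ∘ erefl M 1)^[k] ≠ id) :=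
  dihedral_pq_four_general p q hq hpq X hX M hM
end

section
/- Let p, q > 0 with pq > 4, and X = ((pq−1, −p),(q, −1)). Let λ = (pq−2+√(pq(pq−4)))/2 and μ = (pq−2−√(pq(pq−4)))/2. Then λμ = 1, λ > 1 > μ > 0, and for every positive integer k, X^k = (1/(λ−μ)) · ((μ'λ^k − λ'μ^k, −p(λ^k − μ^k)), (q(λ^k − μ^k), μ'μ^k − λ'λ^k)) where λ' = μ+1 and μ' = λ+1. In particular both entries of the first column of X^k are positive. -/
/-! The matrix `X` has trace `pq - 2 = λ + μ` and determinant `1 = λμ`, so by Cayley–Hamilton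
`(X - λ)(X - μ) = 0`. Reducing `x^k` modulo `(x - λ)(x - μ)` (Lagrange interpolation at `λ, μ`)
gives `(λ - μ) X^k = λ^k (X - μ) - μ^k (X - λ)`, whose entries are the closed form. Since
`0 < μ < 1 < λ`, one has `μ^k < λ^k` for `k > 0`, which makes the first column positive. -/

theorem sub_smul_pow_eq_of_mul_eq_zero {R A : Type*} [CommRing R] [Ring A] [Algebra R A]
    {X : A} {l u : R} (h : (X - algebraMap R A l) * (X - algebraMap R A u) = 0) (k : ℕ) :
    (l - u) • X ^ k = l ^ k • (X - algebraMap R A u) - u ^ k • (X - algebraMap R A l) := by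
  have hcomm : Commute (X - algebraMap R A l) (X - algebraMap R A u) :=
    ((Commute.refl X).sub_right (Algebra.commute_algebraMap_right u X)).sub_left
      ((Algebra.commute_algebraMap_left l X).sub_right (Algebra.commute_algebraMap_left l _))
  have hXl : (X - algebraMap R A l) * X = u • (X - algebraMap R A l) := by
    rw [Algebra.smul_def, Algebra.commutes, ← sub_eq_zero, ← mul_sub, h]
  have hXu : (X - algebraMap R A u) * X = l • (X - algebraMap R A u) := by
    rw [Algebra.smul_def, Algebra.commutes, ← sub_eq_zero, ← mul_sub, ← hcomm.eq, h]
  induction k with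
  | zero => simp [Algebra.algebraMap_eq_smul_one, sub_smul]
  | succ k ih =>
    rw [pow_succ, ← smul_mul_assoc, ih, sub_mul, smul_mul_assoc, smul_mul_assoc, hXl, hXu,
      smul_smul, smul_smul, pow_succ, pow_succ]

theorem Matrix.fin_two_sub_mul_sub_eq_zero {R : Type*} [CommRing R] {M : Matrix (Fin 2) (Fin 2) R}
    {l u : R} (htr : M.trace = l + u) (hdet : M.det = l * u) :
    (M - algebraMap R _ l) * (M - algebraMap R _ u) = 0 := by
  rw [Matrix.trace_fin_two] at htr
  rw [Matrix.det_fin_two] at hdet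
  ext i j
  fin_cases i <;> fin_cases j <;>
    simp [Matrix.mul_apply, Fin.sum_univ_two, Matrix.algebraMap_eq_diagonal]
  · linear_combination M 0 0 * htr - hdet
  · linear_combination M 0 1 * htr
  · linear_combination M 1 0 * htr
  · linear_combination M 1 1 * htr - hdet

section
variable {t : ℝ}

theorem sqrt_mul_sub_four_lt (ht : 2 < t) : √(t * (t - 4)) < t - 2 := by
  rw [Real.sqrt_lt' (by linarith)]
  nlinarith

theorem quadratic_roots_mul_eq_one (ht : 4 ≤ t) :
    (t - 2 + √(t * (t - 4))) / 2 * ((t - 2 - √(t * (t - 4))) / 2) = 1 := by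
  have hsq := Real.sq_sqrt (show 0 ≤ t * (t - 4) by nlinarith)
  linear_combination -hsq / 4

theorem one_lt_quadratic_root (ht : 4 < t) : 1 < (t - 2 + √(t * (t - 4))) / 2 := by
  have := Real.sqrt_pos.2 (show 0 < t * (t - 4) by nlinarith)
  linarith

theorem quadratic_root_pos (ht : 2 < t) : 0 < (t - 2 - √(t * (t - 4))) / 2 := by
  linarith [sqrt_mul_sub_four_lt ht]

end

theorem dihedral_pq_gt_four_general (p q : ℝ) (hq : 0 < q) (hpq : 4 < p * q)
    (X : Matrix (Fin 2) (Fin 2) ℝ) (hX : X = !![p * q - 1, -p; q, -1])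
    (l u : ℝ) (hl : l = (p * q - 2 + Real.sqrt (p * q * (p * q - 4))) / 2)
    (hu : u = (p * q - 2 - Real.sqrt (p * q * (p * q - 4))) / 2) :
    l * u = 1 ∧ 1 < l ∧ u < 1 ∧ 0 < u ∧
    (∀ k : ℕ, 0 < k →
      X ^ k = (1 / (l - u)) •
        !![(l + 1) * l ^ k - (u + 1) * u ^ k, -p * (l ^ k - u ^ k);
           q * (l ^ k - u ^ k), (l + 1) * u ^ k - (u + 1) * l ^ k]) ∧
    (∀ k : ℕ, 0 < k → 0 < (X ^ k) 0 0 ∧ 0 < (X ^ k) 1 0) := by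
  have hlu : l * u = 1 := hl ▸ hu ▸ quadratic_roots_mul_eq_one hpq.le
  have hl1 : 1 < l := hl ▸ one_lt_quadratic_root hpq
  have hu0 : 0 < u := hu ▸ quadratic_root_pos (by linarith)
  have hu1 : u < 1 := by nlinarith
  have htr : p * q = l + u + 2 := by rw [hl, hu]; ring
  have hX2 : (X - algebraMap ℝ _ l) * (X - algebraMap ℝ _ u) = 0 :=
    Matrix.fin_two_sub_mul_sub_eq_zero (by rw [hX, Matrix.trace_fin_two_of]; linarith)
      (by rw [hX, Matrix.det_fin_two_of]; linear_combination -hlu)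
  have hclosed (k : ℕ) : X ^ k = (1 / (l - u)) •
      !![(l + 1) * l ^ k - (u + 1) * u ^ k, -p * (l ^ k - u ^ k);
         q * (l ^ k - u ^ k), (l + 1) * u ^ k - (u + 1) * l ^ k] := by
    rw [← inv_smul_smul₀ (sub_ne_zero.2 (by linarith : l ≠ u)) (X ^ k),
      sub_smul_pow_eq_of_mul_eq_zero hX2, hX, one_div]
    congr 1
    ext i j
    fin_cases i <;> fin_cases j <;> simp [Matrix.algebraMap_eq_diagonal]
    · linear_combination (l ^ k - u ^ k) * htr
    all_goals ring
  refine ⟨hlu, hl1, hu1, hu0, fun k _ => hclosed k, fun k hk => ?_⟩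
  have hpow : u ^ k < l ^ k := pow_lt_pow_left₀ (by linarith) hu0.le hk.ne'
  have hcoef : 0 < 1 / (l - u) := one_div_pos.2 (by linarith)
  have hweighted : (u + 1) * u ^ k < (l + 1) * l ^ k :=
    mul_lt_mul'' (by linarith) hpow (by linarith) (by positivity)
  rw [hclosed k]
  simp only [Matrix.smul_apply, Matrix.of_apply, Matrix.cons_val', Matrix.cons_val_zero,
    Matrix.cons_val_one, Matrix.cons_val_fin_one, smul_eq_mul]
  exact ⟨mul_pos hcoef (sub_pos.2 hweighted), mul_pos hcoef (mul_pos hq (sub_pos.2 hpow))⟩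

/-- When `pq > 4`: with eigenvalues `λ = (pq−2+√(pq(pq−4)))/2` and `μ = (pq−2−√(pq(pq−4)))/2`
of `X = ((pq−1,−p),(q,−1))`, one has `λμ = 1`, `λ > 1 > μ > 0`, the closed form for `X^k`
(with `λ' = μ+1`, `μ' = λ+1`), and both first-column entries of `X^k` are positive. -/
theorem dihedral_pq_gt_four (p q : ℝ) (hp : 0 < p) (hq : 0 < q) (hpq : 4 < p * q)
    (X : Matrix (Fin 2) (Fin 2) ℝ) (hX : X = !![p * q - 1, -p; q, -1])
    (l u : ℝ) (hl : l = (p * q - 2 + Real.sqrt (p * q * (p * q - 4))) / 2)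
    (hu : u = (p * q - 2 - Real.sqrt (p * q * (p * q - 4))) / 2) :
    l * u = 1 ∧ 1 < l ∧ u < 1 ∧ 0 < u ∧
    (∀ k : ℕ, 0 < k →
      X ^ k = (1 / (l - u)) •
        !![(l + 1) * l ^ k - (u + 1) * u ^ k, -p * (l ^ k - u ^ k);
           q * (l ^ k - u ^ k), (l + 1) * u ^ k - (u + 1) * l ^ k]) ∧
    (∀ k : ℕ, 0 < k → 0 < (X ^ k) 0 0 ∧ 0 < (X ^ k) 1 0) :=
  dihedral_pq_gt_four_general p q hq hpq X hX l u hl hu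
end

section
/- In the quasi-standard geometric representation of a Coxeter group W associated to an E-GCM graph, for every w ∈ W and generator index i: if ℓ(ws_i) > ℓ(w) then w·α_i is a nonnegative linear combination of the simple roots (a positive root), and if ℓ(ws_i) < ℓ(w) then w·α_i is a nonpositive linear combination of the simple roots (a negative root). -/
open Real

/-- The quasi-standard reflection `s_i` as a linear endomorphism of `V = ℝⁿ` with basis of
simple roots `α_j = Pi.single j 1`: `s_i(v) = v − 2B(α_i,v)α_i` where `B(α_i,α_j) = M_ij/2`. -/
noncomputable def reflLin {n : ℕ} (M : Matrix (Fin n) (Fin n) ℝ) (i : Fin n) :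
    Module.End ℝ (Fin n → ℝ) where
  toFun v := v - (∑ j, M i j * v j) • (Pi.single i 1 : Fin n → ℝ)
  map_add' v w := by
    ext t
    simp only [Pi.add_apply, Pi.sub_apply, Pi.smul_apply, smul_eq_mul, mul_add,
      Finset.sum_add_distrib]
    ring
  map_smul' c v := by
    ext t
    simp only [Pi.smul_apply, Pi.sub_apply, smul_eq_mul, RingHom.id_apply]
    rw [show (∑ j, M i j * (c * v j)) = c * ∑ j, M i j * v j from by
      rw [Finset.mul_sum]; exact Finset.sum_congr rfl fun j _ => by ring]
    ring

/-- `M` is an E-generalized Cartan matrix whose amplitude products correspond to the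
Coxeter matrix `K` (where `K i j = 0` encodes `m_ij = ∞`). -/
def IsEGCM {n : ℕ} (M : Matrix (Fin n) (Fin n) ℝ) (K : CoxeterMatrix (Fin n)) : Prop :=
  (∀ i, M i i = 2) ∧ (∀ i j, i ≠ j → M i j ≤ 0) ∧ (∀ i j, M i j = 0 ↔ M j i = 0) ∧
  (∀ i j, i ≠ j →
    (K i j = 0 ∧ 4 ≤ M i j * M j i) ∨
    (2 ≤ K i j ∧ M i j * M j i = 4 * Real.cos (π / (K i j : ℝ)) ^ 2))

noncomputable def pq (c d : ℝ) : ℕ → ℝ × ℝ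
  | 0 => (1, 0)
  | (k+1) =>
    if Even k then ((pq c d k).1, (pq c d k).1 * d - (pq c d k).2)
    else ((pq c d k).2 * c - (pq c d k).1, (pq c d k).2)

lemma sin_helper (x θ : ℝ) : Real.sin (x + θ) + Real.sin (x - θ) = 2 * Real.sin x * Real.cos θ := by
  rw [Real.sin_add, Real.sin_sub]; ring

lemma pq_formula (c d θ : ℝ) (hθ1 : 0 < θ) (hθ2 : θ < π/2)
    (he : c * d = 4 * Real.cos θ ^ 2) : ∀ t : ℕ,
    (pq c d (2*t)).1 = Real.sin ((2*(t:ℝ)+1) * θ) / Real.sin θ ∧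
    (pq c d (2*t)).2 = d * Real.sin ((2*(t:ℝ)) * θ) / Real.sin (2*θ) ∧
    (pq c d (2*t+1)).1 = Real.sin ((2*(t:ℝ)+1) * θ) / Real.sin θ ∧
    (pq c d (2*t+1)).2 = d * Real.sin ((2*(t:ℝ)+2) * θ) / Real.sin (2*θ) := by
  have hs1 : 0 < Real.sin θ := Real.sin_pos_of_pos_of_lt_pi hθ1 (by linarith [Real.pi_pos])
  have hs2 : 0 < Real.sin (2*θ) := Real.sin_pos_of_pos_of_lt_pi (by linarith) (by linarith)
  have hcos : 0 < Real.cos θ := Real.cos_pos_of_mem_Ioo ⟨by linarith, hθ2⟩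
  have hsin2 : Real.sin (2*θ) = 2 * Real.sin θ * Real.cos θ := by
    rw [two_mul, Real.sin_add]; ring
  have key : ∀ x : ℝ, Real.sin ((x+2) * θ) = 2 * Real.sin ((x+1)*θ) * Real.cos θ
      - Real.sin (x * θ) := by
    intro x
    have h := sin_helper ((x+1)*θ) θ
    rw [show (x+1)*θ + θ = (x+2)*θ by ring, show (x+1)*θ - θ = x*θ by ring] at h
    linarith
  intro t
  induction t with
  | zero =>
    norm_num
    refine ⟨(div_self hs1.ne').symm, ?_, ?_, ?_⟩
    · show (pq c d 0).2 = _
      simp [pq]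
    · show (pq c d 1).1 = _
      rw [pq, if_pos (by norm_num)]
      exact (div_self hs1.ne').symm
    · show (pq c d 1).2 = _
      rw [pq, if_pos (by norm_num)]
      simp [pq]
      rw [mul_div_assoc, div_self hs2.ne']; ring
  | succ t ih =>
    obtain ⟨h1, h2, h3, h4⟩ := ih
    have hA : Real.sin ((2*(t:ℝ)+3)*θ) = 2 * Real.sin ((2*(t:ℝ)+2)*θ) * Real.cos θ
        - Real.sin ((2*(t:ℝ)+1)*θ) := by
      have := key (2*(t:ℝ)+1)
      rw [show (2*(t:ℝ)+1+2) = 2*(t:ℝ)+3 by ring, show (2*(t:ℝ)+1+1) = 2*(t:ℝ)+2 by ring] at this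
      linarith
    have hB : Real.sin ((2*(t:ℝ)+4)*θ) = 2 * Real.sin ((2*(t:ℝ)+3)*θ) * Real.cos θ
        - Real.sin ((2*(t:ℝ)+2)*θ) := by
      have := key (2*(t:ℝ)+2)
      rw [show (2*(t:ℝ)+2+2) = 2*(t:ℝ)+4 by ring, show (2*(t:ℝ)+2+1) = 2*(t:ℝ)+3 by ring] at this
      linarith
    have hcast : ∀ r : ℝ, (2*((t:ℝ)+1)+r) = 2*(t:ℝ)+(2+r) := by intro r; ring
    have e1 : (pq c d (2*(t+1))).1 = Real.sin ((2*(t:ℝ)+3) * θ) / Real.sin θ := by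
      have hidx : 2*(t+1) = (2*t+1) + 1 := by ring
      rw [hidx, pq, if_neg (by simp [parity_simps])]
      simp only [h3, h4]
      have hd : d ≠ 0 := by
        intro h0
        rw [h0, mul_zero] at he
        nlinarith [he, hcos]
      have hc : c = 4 * Real.cos θ ^ 2 / d := by
        field_simp
        linarith [he]
      rw [hA, hsin2, hc]
      field_simp
      ring
    have e2 : (pq c d (2*(t+1))).2 = d * Real.sin ((2*(t:ℝ)+2) * θ) / Real.sin (2*θ) := by
      have hidx : 2*(t+1) = (2*t+1) + 1 := by ring
      rw [hidx, pq, if_neg (by simp [parity_simps])]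
      exact h4
    have e3 : (pq c d (2*(t+1)+1)).1 = Real.sin ((2*(t:ℝ)+3) * θ) / Real.sin θ := by
      rw [pq, if_pos (by simp [parity_simps])]
      exact e1
    have e4 : (pq c d (2*(t+1)+1)).2 = d * Real.sin ((2*(t:ℝ)+4) * θ) / Real.sin (2*θ) := by
      rw [pq, if_pos (by simp [parity_simps])]
      simp only [e1, e2]
      rw [hB, hsin2]
      field_simp
    rw [Nat.cast_add, Nat.cast_one,
      show (2*((t:ℝ)+1)+1) = 2*(t:ℝ)+3 by ring,
      show (2*((t:ℝ)+1)) = 2*(t:ℝ)+2 by ring,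
      show (2*(t:ℝ)+2+2) = 2*(t:ℝ)+4 by ring]
    exact ⟨e1, e2, e3, e4⟩

lemma pq_nonneg_fin (c d : ℝ) (hd : 0 ≤ d) (m : ℕ) (hm : 2 ≤ m)
    (he : c * d = 4 * Real.cos (π / m) ^ 2) :
    ∀ k < m, 0 ≤ (pq c d k).1 ∧ 0 ≤ (pq c d k).2 := by
  intro k hk
  rcases Nat.lt_or_ge k 2 with hk2 | hk2
  · interval_cases k
    · exact ⟨by norm_num [pq], by norm_num [pq]⟩
    · rw [show (1:ℕ) = 0 + 1 from rfl, pq, if_pos (by norm_num)]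
      exact ⟨by norm_num [pq], by simpa [pq] using hd⟩
  · -- k ≥ 2 hence m ≥ 3
    have hm3 : 3 ≤ m := by omega
    have hmpos : (0:ℝ) < m := by positivity
    set θ : ℝ := π / m with hθ
    have hθ1 : 0 < θ := by positivity
    have hθ2 : θ < π / 2 := by
      rw [hθ, div_lt_div_iff₀ hmpos (by norm_num)]
      have h3 : (3:ℝ) ≤ m := by exact_mod_cast hm3
      nlinarith [Real.pi_pos, mul_le_mul_of_nonneg_left h3 Real.pi_pos.le]
    have hs1 : 0 < Real.sin θ := Real.sin_pos_of_pos_of_lt_pi hθ1 (by linarith [Real.pi_pos])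
    have hs2 : 0 < Real.sin (2*θ) := Real.sin_pos_of_pos_of_lt_pi (by linarith) (by linarith)
    have key : ∀ l : ℕ, l ≤ m → 0 ≤ Real.sin (l * θ) := by
      intro l hl
      apply Real.sin_nonneg_of_nonneg_of_le_pi (by positivity)
      rw [hθ]
      calc (l:ℝ) * (π / m) ≤ m * (π / m) := by
            apply mul_le_mul_of_nonneg_right _ (by positivity)
            exact_mod_cast hl
        _ = π := by field_simp
    have hF := pq_formula c d θ hθ1 hθ2 he
    rcases Nat.even_or_odd k with ⟨t, ht⟩ | ⟨t, ht⟩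
    · obtain ⟨h1, h2, _, _⟩ := hF t
      rw [show k = 2*t by omega]
      constructor
      · rw [h1]
        apply div_nonneg _ hs1.le
        have := key (2*t+1) (by omega)
        rwa [show ((2*t+1 : ℕ):ℝ) = 2*(t:ℝ)+1 by push_cast; ring] at this
      · rw [h2]
        apply div_nonneg _ hs2.le
        have := key (2*t) (by omega)
        rw [show ((2*t : ℕ):ℝ) = 2*(t:ℝ) by push_cast; ring] at this
        exact mul_nonneg hd this
    · obtain ⟨_, _, h3, h4⟩ := hF t
      rw [show k = 2*t+1 by omega]
      constructor
      · rw [h3]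
        apply div_nonneg _ hs1.le
        have := key (2*t+1) (by omega)
        rwa [show ((2*t+1 : ℕ):ℝ) = 2*(t:ℝ)+1 by push_cast; ring] at this
      · rw [h4]
        apply div_nonneg _ hs2.le
        have := key (2*t+2) (by omega)
        rw [show ((2*t+2 : ℕ):ℝ) = 2*(t:ℝ)+2 by push_cast; ring] at this
        exact mul_nonneg hd this

lemma pq_nonneg_inf (c d : ℝ) (hc : 0 ≤ c) (hd : 0 ≤ d) (he : 4 ≤ c * d) :
    ∀ k, 0 ≤ (pq c d k).1 ∧ 0 ≤ (pq c d k).2 := by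
  have hd0 : 0 < d := by
    rcases hd.lt_or_eq with h | h
    · exact h
    · nlinarith
  have inv : ∀ t : ℕ, 1 ≤ (pq c d (2*t)).1 ∧ (pq c d (2*t+1)).1 = (pq c d (2*t)).1 ∧
      d ≤ (pq c d (2*t+1)).2 ∧ (pq c d (2*t+1)).2 ≤ d * (pq c d (2*t)).1 ∧
      d * (pq c d (2*t)).1 ≤ (c*d-2) * (pq c d (2*t+1)).2 ∧
      (pq c d (2*t+2)).2 = (pq c d (2*t+1)).2 := by
    intro t
    induction t with
    | zero =>
      have h0 : pq c d 0 = (1, 0) := rfl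
      have h1 : pq c d 1 = (1, d) := by rw [show (1:ℕ) = 0+1 from rfl, pq, if_pos (by norm_num)]; simp [pq]
      have h2 : (pq c d 2).2 = d := by
        rw [show (2:ℕ) = 1+1 from rfl, pq, if_neg (by norm_num), h1]
      simp only [Nat.mul_zero, Nat.zero_add, h0, h1, h2]
      norm_num
      nlinarith
    | succ t ih =>
      obtain ⟨i1, i2, i3, i4, i5, i6⟩ := ih
      set p := (pq c d (2*t)).1 with hp
      set q := (pq c d (2*t+1)).2 with hq
      have hq0 : 0 ≤ q := le_trans hd i3
      have hP : (pq c d (2*(t+1))).1 = q * c - p := by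
        rw [show 2*(t+1) = (2*t+1)+1 by ring, pq, if_neg (by simp [parity_simps])]
        simp only [← hp, ← hq, i2]
      have hQ2 : (pq c d (2*(t+1))).2 = q := by
        rw [show 2*(t+1) = 2*t+2 by ring]; exact i6
      have hP1 : (pq c d (2*(t+1)+1)).1 = q * c - p := by
        rw [pq, if_pos (by simp [parity_simps])]
        exact hP
      have hQ3 : (pq c d (2*(t+1)+1)).2 = (q*c - p)*d - q := by
        rw [pq, if_pos (by simp [parity_simps])]
        simp only [hP, hQ2]
      have hQ4 : (pq c d (2*(t+1)+2)).2 = (pq c d (2*(t+1)+1)).2 := by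
        rw [show 2*(t+1)+2 = (2*(t+1)+1)+1 by ring, pq, if_neg (by simp [parity_simps])]
      have key1 : 2*q ≤ d * (q*c - p) := by nlinarith [i5]
      have g1 : 1 ≤ q * c - p := by nlinarith [key1, i3, hd0]
      refine ⟨by rw [hP]; exact g1, by rw [hP1, hP], ?_, ?_, ?_, by rw [hQ4]⟩
      · rw [hQ3]; linarith [key1, i3]
      · rw [hQ3, hP]; linarith [hq0]
      · rw [hQ3, hP]
        have h53 : (0:ℝ) ≤ c*d - 3 := by linarith [he]
        have hmul : (c*d-3)*(d*p) ≤ (c*d-3)*((c*d-2)*q) := mul_le_mul_of_nonneg_left i5 h53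
        have hlast : 0 ≤ (c*d-4)*q := mul_nonneg (by linarith) hq0
        nlinarith [hmul, hlast]
  intro k
  rcases Nat.even_or_odd k with ⟨t, ht⟩ | ⟨t, ht⟩
  · rw [show k = 2*t by omega]
    obtain ⟨i1, _, i3, _, _, i6⟩ := inv t
    refine ⟨by linarith, ?_⟩
    cases t with
    | zero => norm_num [pq]
    | succ t' =>
      obtain ⟨_, _, i3', _, _, i6'⟩ := inv t'
      rw [show 2*(t'+1) = 2*t'+2 by ring, i6']
      linarith
  · rw [show k = 2*t+1 by omega]
    obtain ⟨i1, i2, i3, _, _, _⟩ := inv t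
    exact ⟨by rw [i2]; linarith, by linarith⟩

lemma reflLin_apply {n : ℕ} (M : Matrix (Fin n) (Fin n) ℝ) (a : Fin n) (v : Fin n → ℝ) :
    reflLin M a v = v - (∑ j, M a j * v j) • (Pi.single a 1 : Fin n → ℝ) := rfl

lemma reflLin_combo {n : ℕ} (M : Matrix (Fin n) (Fin n) ℝ) (a b : Fin n) (hab : a ≠ b)
    (h2 : M a a = 2) (p q : ℝ) :
    reflLin M a (p • (Pi.single a 1 : Fin n → ℝ) + q • (Pi.single b 1 : Fin n → ℝ)) =
      (q * (-M a b) - p) • (Pi.single a 1 : Fin n → ℝ) + q • (Pi.single b 1 : Fin n → ℝ) := by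
  have hsum : (∑ t, M a t * (p • (Pi.single a 1 : Fin n → ℝ) + q • (Pi.single b 1 : Fin n → ℝ)) t)
      = p * M a a + q * M a b := by
    have hterm : ∀ t, M a t * (p • (Pi.single a 1 : Fin n → ℝ) + q • (Pi.single b 1 : Fin n → ℝ)) t
        = (if t = a then p * M a a else 0) + (if t = b then q * M a b else 0) := by
      intro t
      simp only [Pi.add_apply, Pi.smul_apply, smul_eq_mul, Pi.single_apply]
      rcases eq_or_ne t a with rfl | h1 <;> rcases eq_or_ne t b with rfl | hb1 <;>
        simp_all <;> ring
    rw [Finset.sum_congr rfl (fun t _ => hterm t), Finset.sum_add_distrib,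
      Finset.sum_ite_eq' Finset.univ a (fun _ => p * M a a),
      Finset.sum_ite_eq' Finset.univ b (fun _ => q * M a b)]
    simp
  rw [reflLin_apply, hsum]
  ext t
  simp only [Pi.add_apply, Pi.sub_apply, Pi.smul_apply, smul_eq_mul, Pi.single_apply]
  rcases eq_or_ne t a with rfl | h1 <;> rcases eq_or_ne t b with rfl | hb1 <;>
    simp_all <;> ring


section
variable {n : ℕ} {W : Type*} [Group W]
  (K : CoxeterMatrix (Fin n)) (cs : CoxeterSystem K W)

open CoxeterSystem

lemma alt_one (i j : Fin n) : alternatingWord i j 1 = [j] := rfl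

lemma alt_step (i j a : Fin n) (hij : i ≠ j) (ha : a = i ∨ a = j) (k : ℕ) :
    cs.simple a * cs.wordProd (alternatingWord i j k) =
      cs.wordProd (alternatingWord i j (k+1)) ∨
    (cs.simple a * cs.wordProd (alternatingWord i j k) =
      cs.wordProd (alternatingWord j i (k+1)) ∧ k = 0) ∨
    (1 ≤ k ∧ cs.simple a * cs.wordProd (alternatingWord i j k) =
      cs.wordProd (alternatingWord i j (k-1))) := by
  cases k with
  | zero =>
    rcases ha with rfl | rfl
    · right; left
      refine ⟨?_, rfl⟩
      rw [alt_one j a, cs.wordProd_singleton]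
      simp [CoxeterSystem.alternatingWord]
    · left
      rw [alt_one i a, cs.wordProd_singleton]
      simp [CoxeterSystem.alternatingWord]
  | succ k' =>
    by_cases haf : a = (if Even (k'+1) then j else i)
    · left
      rw [alternatingWord_succ' i j (k'+1), cs.wordProd_cons, haf]
    · have hag : a = (if Even k' then j else i) := by
        rcases Nat.even_or_odd k' with he | ho
        · have : ¬ Even (k'+1) := by simp [Nat.even_add_one, he]
          rw [if_neg this] at haf
          rw [if_pos he]
          tauto
        · have h1 : Even (k'+1) := by simp [Nat.even_add_one, Nat.not_even_iff_odd, ho]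
          rw [if_pos h1] at haf
          rw [if_neg (Nat.not_even_iff_odd.mpr ho)]
          tauto
      right; right
      refine ⟨by omega, ?_⟩
      conv_lhs => rw [alternatingWord_succ' i j k', cs.wordProd_cons, ← hag,
        cs.simple_mul_simple_cancel_left]
      norm_num

lemma altP_step (i j a : Fin n) (hij : i ≠ j) (ha : a = i ∨ a = j) (v : W) (k : ℕ)
    (hv : v = cs.wordProd (alternatingWord i j k) ∨ v = cs.wordProd (alternatingWord j i k)) :
    ((cs.simple a * v = cs.wordProd (alternatingWord i j (k+1)) ∨
      cs.simple a * v = cs.wordProd (alternatingWord j i (k+1)))) ∨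
    (1 ≤ k ∧ (cs.simple a * v = cs.wordProd (alternatingWord i j (k-1)) ∨
      cs.simple a * v = cs.wordProd (alternatingWord j i (k-1)))) := by
  rcases hv with rfl | rfl
  · rcases alt_step K cs i j a hij ha k with h | ⟨h, _⟩ | ⟨h1, h⟩
    · exact Or.inl (Or.inl h)
    · exact Or.inl (Or.inr h)
    · exact Or.inr ⟨h1, Or.inl h⟩
  · rcases alt_step K cs j i a hij.symm ha.symm k with h | ⟨h, _⟩ | ⟨h1, h⟩
    · exact Or.inl (Or.inr h)
    · exact Or.inl (Or.inl h)
    · exact Or.inr ⟨h1, Or.inr h⟩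

lemma alt_reduce (i j : Fin n) (k : ℕ) (h : K i j * 2 ≤ k) :
    cs.wordProd (alternatingWord i j k) =
      cs.wordProd (alternatingWord i j (k - K i j * 2)) := by
  rw [cs.prod_alternatingWord_eq_mul_pow, cs.prod_alternatingWord_eq_mul_pow]
  have hev : Even (k - K i j * 2) ↔ Even k := by
    rw [Nat.even_sub h]; simp [parity_simps]
  have hdiv : (k - K i j * 2) / 2 = k / 2 - K i j := by omega
  rw [hdiv]
  have hpow : (cs.simple i * cs.simple j) ^ (k / 2) =
      (cs.simple i * cs.simple j) ^ (k / 2 - K i j) := by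
    conv_lhs => rw [show k / 2 = (k / 2 - K i j) + K i j by omega]
    rw [pow_add, cs.simple_mul_simple_pow, mul_one]
  rw [← hpow]
  congr 1
  simp only [hev]

end

section
variable {n : ℕ} {W : Type*} [Group W]
  (M : Matrix (Fin n) (Fin n) ℝ) (K : CoxeterMatrix (Fin n)) (cs : CoxeterSystem K W)

open CoxeterSystem

lemma rho_alt (ρ : W →* Module.End ℝ (Fin n → ℝ)) (hρ : ∀ i, ρ (cs.simple i) = reflLin M i)
    (h2 : ∀ i, M i i = 2) (i j : Fin n) (hij : i ≠ j) (k : ℕ) :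
    ρ (cs.wordProd (alternatingWord i j k)) (Pi.single i 1) =
      (pq (-M i j) (-M j i) k).1 • (Pi.single i 1 : Fin n → ℝ) +
      (pq (-M i j) (-M j i) k).2 • (Pi.single j 1 : Fin n → ℝ) := by
  induction k with
  | zero =>
    show ρ (cs.wordProd []) _ = _
    rw [cs.wordProd_nil, map_one]
    show Pi.single i 1 = _
    simp [pq]
  | succ k ih =>
    rw [alternatingWord_succ', cs.wordProd_cons, map_mul, Module.End.mul_apply, ih]
    by_cases hk : Even k
    · rw [if_pos hk, hρ]
      rw [pq, if_pos hk]
      have h := reflLin_combo M j i hij.symm (h2 j)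
        (pq (-M i j) (-M j i) k).2 (pq (-M i j) (-M j i) k).1
      rw [add_comm ((pq (-M i j) (-M j i) k).1 • _) ((pq (-M i j) (-M j i) k).2 • _), h,
        add_comm]
    · rw [if_neg hk, hρ]
      rw [pq, if_neg hk]
      exact reflLin_combo M i j hij (h2 i)
        (pq (-M i j) (-M j i) k).1 (pq (-M i j) (-M j i) k).2

lemma posA (hMK : IsEGCM M K) (ρ : W →* Module.End ℝ (Fin n → ℝ))
    (hρ : ∀ i, ρ (cs.simple i) = reflLin M i) :
    ∀ N : ℕ, ∀ w : W, ∀ i : Fin n, cs.length w ≤ N →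
      cs.length w < cs.length (w * cs.simple i) →
      ∀ t, 0 ≤ ρ w (Pi.single i 1) t := by
  obtain ⟨h2, hsign, hzero, hprodc⟩ := hMK
  classical
  intro N
  induction N with
  | zero =>
    intro w i hw _ t
    have hone : w = 1 := cs.length_eq_zero_iff.mp (Nat.le_zero.mp hw)
    subst hone
    rw [map_one]
    rw [show ((1 : Module.End ℝ (Fin n → ℝ)) (Pi.single i 1)) = Pi.single i 1 from rfl,
      Pi.single_apply]
    split <;> norm_num
  | succ N IH =>
    intro w i hw hi
    rcases Nat.lt_or_ge (cs.length w) (N+1) with hlt | hge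
    · exact IH w i (by omega) hi
    have hlw : cs.length w = N + 1 := le_antisymm hw hge
    have hw1 : w ≠ 1 := by
      intro h
      rw [h, cs.length_one] at hlw
      omega
    obtain ⟨j, hjd⟩ := cs.exists_rightDescent_of_ne_one hw1
    have hj : cs.length (w * cs.simple j) < cs.length w := hjd
    have hij : i ≠ j := by
      rintro rfl
      omega
    -- the minimization set
    set P : ℕ → Prop := fun N' => ∃ x : W × ℕ,
      ((x.1⁻¹ * w = cs.wordProd (alternatingWord i j x.2) ∨
        x.1⁻¹ * w = cs.wordProd (alternatingWord j i x.2)) ∧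
        cs.length x.1 + x.2 = cs.length w) ∧ cs.length x.1 = N' with hPdef
    have hPex : P (cs.length (w * cs.simple j)) := by
      refine ⟨(w * cs.simple j, 1), ⟨⟨Or.inl ?_, ?_⟩, rfl⟩⟩
      · show (w * cs.simple j)⁻¹ * w = _
        rw [alt_one, cs.wordProd_singleton]
        simp [mul_inv_rev, cs.inv_simple, mul_assoc]
      · show cs.length (w * cs.simple j) + 1 = cs.length w
        rcases cs.length_mul_simple w j with h | h <;> omega
    have hEx : ∃ N', P N' := ⟨_, hPex⟩
    obtain ⟨⟨u, k⟩, ⟨hAlt0, hadd0⟩, hu0⟩ := Nat.find_spec hEx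
    have hAlt : u⁻¹ * w = cs.wordProd (alternatingWord i j k) ∨
        u⁻¹ * w = cs.wordProd (alternatingWord j i k) := hAlt0
    have hadd : cs.length u + k = cs.length w := hadd0
    have hu : cs.length u = Nat.find hEx := hu0
    have hule : cs.length u ≤ cs.length (w * cs.simple j) := by
      rw [hu]
      exact Nat.find_min' hEx hPex
    have hulw : cs.length u < cs.length w := lt_of_le_of_lt hule hj
    have hk1 : 1 ≤ k := by omega
    have hwuv : w = u * (u⁻¹ * w) := by group
    -- both letters ascend at u
    have hdesc : ∀ a : Fin n, (a = i ∨ a = j) →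
        cs.length u < cs.length (u * cs.simple a) := by
      intro a ha
      by_contra hcon
      push_neg at hcon
      have hne := cs.length_mul_simple_ne u a
      have hua : cs.length (u * cs.simple a) + 1 = cs.length u := by
        rcases cs.length_mul_simple u a with h | h <;> omega
      have hinv : (u * cs.simple a)⁻¹ * w = cs.simple a * (u⁻¹ * w) := by
        rw [mul_inv_rev, cs.inv_simple, mul_assoc]
      rcases altP_step K cs i j a hij ha (u⁻¹ * w) k hAlt with hnew | ⟨hkge, hnew⟩
      · have hPA : P (cs.length (u * cs.simple a)) := by
          refine ⟨(u * cs.simple a, k+1), ⟨⟨?_, ?_⟩, rfl⟩⟩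
          · show ((u * cs.simple a)⁻¹ * w = cs.wordProd (alternatingWord i j (k+1)) ∨
              (u * cs.simple a)⁻¹ * w = cs.wordProd (alternatingWord j i (k+1)))
            rw [hinv]
            exact hnew
          · show cs.length (u * cs.simple a) + (k+1) = cs.length w
            omega
        have := Nat.find_min' hEx hPA
        omega
      · have hlen : cs.length (cs.simple a * (u⁻¹ * w)) ≤ k - 1 := by
          rcases hnew with h | h
          · rw [h]
            have := cs.length_wordProd_le (alternatingWord i j (k-1))
            rwa [length_alternatingWord] at this
          · rw [h]
            have := cs.length_wordProd_le (alternatingWord j i (k-1))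
            rwa [length_alternatingWord] at this
        have hsplit : w = (u * cs.simple a) * (cs.simple a * (u⁻¹ * w)) := by
          rw [mul_assoc, cs.simple_mul_simple_cancel_left]
          group
        have hlew : cs.length w ≤ cs.length (u * cs.simple a) +
            cs.length (cs.simple a * (u⁻¹ * w)) := by
          conv_lhs => rw [hsplit]
          exact cs.length_mul_le _ _
        omega
    -- no short representation ending in i
    have hnoti : ∀ k', 1 ≤ k' → k' ≤ k →
        u⁻¹ * w ≠ cs.wordProd (alternatingWord j i k') := by
      intro k' hk'1 hk'k hcon
      have hconc : alternatingWord j i k' = (alternatingWord i j (k'-1)).concat i := by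
        conv_lhs => rw [show k' = (k'-1)+1 by omega]
        rfl
      have hws : w * cs.simple i = u * cs.wordProd (alternatingWord i j (k'-1)) := by
        conv_lhs => rw [hwuv, hcon, hconc, cs.wordProd_concat]
        rw [mul_assoc, mul_assoc, cs.simple_mul_simple_self, mul_one]
      have hle : cs.length (w * cs.simple i) ≤ cs.length u + (k' - 1) := by
        rw [hws]
        calc cs.length (u * cs.wordProd (alternatingWord i j (k'-1)))
            ≤ cs.length u + cs.length (cs.wordProd (alternatingWord i j (k'-1))) :=
              cs.length_mul_le _ _
          _ ≤ cs.length u + (k' - 1) := by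
              have := cs.length_wordProd_le (alternatingWord i j (k'-1))
              rw [length_alternatingWord] at this
              omega
      omega
    -- the representation ends in j
    have hrep : u⁻¹ * w = cs.wordProd (alternatingWord i j k) := by
      rcases hAlt with h | h
      · exact h
      · exact absurd h (hnoti k hk1 le_rfl)
    -- bound k by the Coxeter matrix entry
    have hcase := hprodc i j hij
    have hkm : K i j = 0 ∨ k < K i j := by
      rcases hcase with ⟨hm0, _⟩ | ⟨hm2, _⟩
      · exact Or.inl hm0
      · right
        by_contra hkge
        push_neg at hkge
        rcases Nat.lt_or_ge k (K i j * 2 + 1) with h2m | h2m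
        · -- m ≤ k ≤ 2m : flip the word
          have hflip := cs.prod_alternatingWord_eq_prod_alternatingWord_sub i j k (by omega)
          rcases Nat.eq_zero_or_pos (K i j * 2 - k) with hz | hpos
          · have hv1 : u⁻¹ * w = 1 := by
              rw [hrep, hflip, hz]
              exact cs.wordProd_nil
            have hwu : u = w := inv_mul_eq_one.mp hv1
            rw [hwu] at hulw
            exact absurd hulw (lt_irrefl _)
          · exact hnoti (K i j * 2 - k) hpos (by omega) (hrep.trans hflip)
        · -- k > 2m : reduce the word
          have hred := alt_reduce K cs i j k (by omega)
          have : cs.length w ≤ cs.length u + (k - K i j * 2) := by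
            conv_lhs => rw [hwuv, hrep, hred]
            calc cs.length (u * cs.wordProd (alternatingWord i j (k - K i j * 2)))
                ≤ cs.length u + cs.length (cs.wordProd (alternatingWord i j (k - K i j * 2))) :=
                  cs.length_mul_le _ _
              _ ≤ cs.length u + (k - K i j * 2) := by
                  have := cs.length_wordProd_le (alternatingWord i j (k - K i j * 2))
                  rw [length_alternatingWord] at this
                  omega
          omega
    -- nonnegativity of the coefficients
    have hc : (0:ℝ) ≤ -M i j := neg_nonneg.mpr (hsign i j hij)
    have hd : (0:ℝ) ≤ -M j i := neg_nonneg.mpr (hsign j i hij.symm)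
    have hpq : 0 ≤ (pq (-M i j) (-M j i) k).1 ∧ 0 ≤ (pq (-M i j) (-M j i) k).2 := by
      rcases hkm with hm0 | hklt
      · rcases hcase with ⟨_, h4⟩ | ⟨hm2, _⟩
        · exact pq_nonneg_inf (-M i j) (-M j i) hc hd (by rw [neg_mul_neg]; exact h4) k
        · omega
      · rcases hcase with ⟨hm0', _⟩ | ⟨hm2, heq⟩
        · omega
        · exact pq_nonneg_fin (-M i j) (-M j i) hd (K i j) hm2 (by rw [neg_mul_neg]; exact heq) k hklt
    -- assemble
    have hval := rho_alt M K cs ρ hρ h2 i j hij k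
    have hfinal : ρ w (Pi.single i 1) =
        (pq (-M i j) (-M j i) k).1 • (ρ u (Pi.single i 1)) +
        (pq (-M i j) (-M j i) k).2 • (ρ u (Pi.single j 1)) := by
      conv_lhs => rw [hwuv, hrep]
      rw [map_mul, Module.End.mul_apply, hval, map_add, map_smul, map_smul]
    intro t
    rw [hfinal]
    have hui := hdesc i (Or.inl rfl)
    have huj := hdesc j (Or.inr rfl)
    have hnn1 := IH u i (by omega) hui t
    have hnn2 := IH u j (by omega) huj t
    simp only [Pi.add_apply, Pi.smul_apply, smul_eq_mul]
    exact add_nonneg (mul_nonneg hpq.1 hnn1) (mul_nonneg hpq.2 hnn2)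

end

/-- In the quasi-standard geometric representation of the Coxeter group of an E-GCM graph:
if `ℓ(ws_i) > ℓ(w)` then `w·α_i` is a nonnegative combination of simple roots, and if
`ℓ(ws_i) < ℓ(w)` then `w·α_i` is a nonpositive combination of simple roots. -/
theorem pos_neg_root {n : ℕ} {W : Type*} [Group W]
    (M : Matrix (Fin n) (Fin n) ℝ) (K : CoxeterMatrix (Fin n)) (hMK : IsEGCM M K)
    (cs : CoxeterSystem K W)
    (ρ : W →* Module.End ℝ (Fin n → ℝ))
    (hρ : ∀ i, ρ (cs.simple i) = reflLin M i)
    (w : W) (i : Fin n) :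
    (cs.length w < cs.length (w * cs.simple i) →
      ∀ j, 0 ≤ ρ w (Pi.single i 1) j) ∧
    (cs.length (w * cs.simple i) < cs.length w →
      ∀ j, ρ w (Pi.single i 1) j ≤ 0) := by
  constructor
  · intro hlt t
    exact posA M K cs hMK ρ hρ (cs.length w) w i le_rfl hlt t
  · intro hlt t
    have hw' : cs.length (w * cs.simple i) <
        cs.length ((w * cs.simple i) * cs.simple i) := by
      rw [cs.simple_mul_simple_cancel_right]
      exact hlt
    have hpos := posA M K cs hMK ρ hρ (cs.length (w * cs.simple i))
      (w * cs.simple i) i le_rfl hw' t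
    have h1 : ρ (cs.simple i) (Pi.single i 1) = -(Pi.single i 1) := by
      rw [hρ, reflLin_apply]
      have hs : (∑ t, M i t * (Pi.single i (1:ℝ) : Fin n → ℝ) t) = M i i := by
        simp [Pi.single_apply]
      rw [hs, hMK.1 i]
      ext s
      simp only [Pi.sub_apply, Pi.smul_apply, Pi.neg_apply, smul_eq_mul]
      ring
    have hneg : ρ w (Pi.single i 1) = - (ρ (w * cs.simple i) (Pi.single i 1)) := by
      calc ρ w (Pi.single i 1)
          = ρ ((w * cs.simple i) * cs.simple i) (Pi.single i 1) := by
            rw [cs.simple_mul_simple_cancel_right]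
        _ = ρ (w * cs.simple i) (ρ (cs.simple i) (Pi.single i 1)) := by
            rw [map_mul, Module.End.mul_apply]
        _ = - (ρ (w * cs.simple i) (Pi.single i 1)) := by rw [h1, map_neg]
    rw [hneg]
    simp only [Pi.neg_apply]
    linarith [hpos]
end
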